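/- Fix σ > 0, T > 0 and S₀ = K > 0. Let C₀^B = S₀σ·√(T/(2π)) be the at-the-money Bachelier call price with absolute volatility σ^B = S₀σ, and C₀^{BS} = S₀·(Φ(σ√T/2) − Φ(−σ√T/2)) the at-the-money Black–Merton–Scholes call price with volatility σ^{BS} = σ. Then 0 ≤ C₀^B − C₀^{BS} ≤ (S₀/(12√(2π)))·σ³·T^{3/2}. -/

import Mathlib

open MeasureTheory

/-- The standard normal cumulative distribution function Φ. -/
noncomputable def stdNormalCdf (x : ℝ) : ℝ :=
  ∫ y in Set.Iic x, (Real.sqrt (2 * Real.pi))⁻¹ * Real.exp (-y ^ 2 / 2)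

/-!
Both prices are integrals over `[-a, a]` with `a = σ√T/2`: the Bachelier price integrates the
constant `1/√(2π)`, the Black–Scholes price the Gaussian density `exp (-y²/2)/√(2π)`. Since
`0 ≤ 1 - exp (-y²/2) ≤ y²/2`, the difference lies between `0` and
`(1/√(2π)) ∫_{-a}^a y²/2 = a³/(3√(2π))`, which is half of the claimed bound.
-/

open Real

lemma integrable_exp_neg_sq_div_two : Integrable (fun y : ℝ => exp (-y ^ 2 / 2)) := by
  simpa [neg_div, div_eq_inv_mul] using integrable_exp_neg_mul_sq (b := 1 / 2) (by norm_num)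

lemma stdNormalCdf_sub_stdNormalCdf_neg (a : ℝ) :
    stdNormalCdf a - stdNormalCdf (-a)
      = (√(2 * π))⁻¹ * ∫ y in (-a)..a, exp (-y ^ 2 / 2) := by
  have hf := integrable_exp_neg_sq_div_two.const_mul (√(2 * π))⁻¹
  rw [stdNormalCdf, stdNormalCdf,
    intervalIntegral.integral_Iic_sub_Iic hf.integrableOn hf.integrableOn,
    intervalIntegral.integral_const_mul]

lemma one_sub_exp_neg_sq_div_two_nonneg (y : ℝ) : 0 ≤ 1 - exp (-y ^ 2 / 2) := by
  have : exp (-y ^ 2 / 2) ≤ 1 := exp_le_one_iff.mpr (by nlinarith [sq_nonneg y])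
  linarith

lemma one_sub_exp_neg_sq_div_two_le (y : ℝ) : 1 - exp (-y ^ 2 / 2) ≤ y ^ 2 / 2 := by
  linarith [add_one_le_exp (-y ^ 2 / 2)]

lemma two_mul_sub_integral_exp_neg_sq_div_two (a : ℝ) :
    2 * a - ∫ y in (-a)..a, exp (-y ^ 2 / 2) = ∫ y in (-a)..a, (1 - exp (-y ^ 2 / 2)) := by
  rw [intervalIntegral.integral_sub intervalIntegrable_const
    integrable_exp_neg_sq_div_two.intervalIntegrable, intervalIntegral.integral_const,
    smul_eq_mul, mul_one]
  ring

lemma integral_one_sub_exp_neg_sq_div_two_nonneg {a : ℝ} (ha : 0 ≤ a) :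
    0 ≤ ∫ y in (-a)..a, (1 - exp (-y ^ 2 / 2)) :=
  intervalIntegral.integral_nonneg (by linarith) fun y _ => one_sub_exp_neg_sq_div_two_nonneg y

lemma integral_one_sub_exp_neg_sq_div_two_le {a : ℝ} (ha : 0 ≤ a) :
    ∫ y in (-a)..a, (1 - exp (-y ^ 2 / 2)) ≤ a ^ 3 / 3 := by
  calc ∫ y in (-a)..a, (1 - exp (-y ^ 2 / 2))
      ≤ ∫ y in (-a)..a, y ^ 2 / 2 :=
        intervalIntegral.integral_mono_on (by linarith)
          (intervalIntegrable_const.sub integrable_exp_neg_sq_div_two.intervalIntegrable)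
          (by apply Continuous.intervalIntegrable; fun_prop)
          fun y _ => one_sub_exp_neg_sq_div_two_le y
    _ = a ^ 3 / 3 := by
        rw [intervalIntegral.integral_div, integral_pow]
        ring

/-- Comparison of at-the-money Bachelier and Black–Merton–Scholes prices:
with `C₀^B = S₀σ√(T/(2π))` and `C₀^{BS} = S₀(Φ(σ√T/2) − Φ(−σ√T/2))` one has
`0 ≤ C₀^B − C₀^{BS} ≤ (S₀/(12√(2π)))·σ³·T^{3/2}`. -/
theorem bachelier_vs_black_scholes_atm (σ T S₀ : ℝ) (hσ : 0 < σ) (hT : 0 < T)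
    (hS₀ : 0 < S₀) :
    0 ≤ S₀ * σ * Real.sqrt (T / (2 * Real.pi))
        - S₀ * (stdNormalCdf (σ * Real.sqrt T / 2) - stdNormalCdf (-(σ * Real.sqrt T / 2)))
      ∧ S₀ * σ * Real.sqrt (T / (2 * Real.pi))
          - S₀ * (stdNormalCdf (σ * Real.sqrt T / 2) - stdNormalCdf (-(σ * Real.sqrt T / 2)))
        ≤ S₀ / (12 * Real.sqrt (2 * Real.pi)) * σ ^ 3 * T ^ ((3 : ℝ) / 2) := by
  set a := σ * √T / 2
  have ha : 0 ≤ a := by positivity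
  have hprice : S₀ * σ * √(T / (2 * π)) - S₀ * (stdNormalCdf a - stdNormalCdf (-a))
      = S₀ / √(2 * π) * ∫ y in (-a)..a, (1 - exp (-y ^ 2 / 2)) := by
    rw [stdNormalCdf_sub_stdNormalCdf_neg, ← two_mul_sub_integral_exp_neg_sq_div_two,
      sqrt_div' _ (by positivity)]
    ring
  have hcoef : 0 ≤ S₀ / √(2 * π) := by positivity
  rw [hprice]
  refine ⟨mul_nonneg hcoef (integral_one_sub_exp_neg_sq_div_two_nonneg ha), ?_⟩
  calc S₀ / √(2 * π) * ∫ y in (-a)..a, (1 - exp (-y ^ 2 / 2))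
      ≤ S₀ / √(2 * π) * (a ^ 3 / 3) :=
        mul_le_mul_of_nonneg_left (integral_one_sub_exp_neg_sq_div_two_le ha) hcoef
    _ = S₀ / (24 * √(2 * π)) * σ ^ 3 * T ^ ((3 : ℝ) / 2) := by
        rw [rpow_div_two_eq_sqrt _ hT.le, show (3 : ℝ) = (3 : ℕ) by norm_num, rpow_natCast]
        ring
    _ ≤ S₀ / (12 * √(2 * π)) * σ ^ 3 * T ^ ((3 : ℝ) / 2) := by
        gcongr
        norm_num
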